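/- Let a ≡ 1 (mod 4) with a ≥ 1, i ≥ 0, and n = (16a+17)a + 3 + (4a+1)i + 2a + 1 + l with 0 ≤ l ≤ (3a−1)/2. Then with m = a + n and x = 4(a+1) + i, the minimum of |a·x|_m, |(a+1)·x|_m, |(2a+1)·x|_m, |(3a+1)·x|_m, |n·x|_m equals a(4a+4+i); consequently κ({a, a+1, 2a+1, 3a+1, n}) ≥ (4a(a+1) + ai)/(a+n). -/
import Mathlib

/-- `absMod y m` is the distance from `y` to the nearest multiple of `m`. -/
def absMod (y m : ℕ) : ℕ := min (y % m) (m - y % m)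

/-- `S` is an `M`-set: no two (distinct) elements of `S` differ by an element of `M`. -/
def isMSet (M S : Set ℕ) : Prop := ∀ x ∈ S, ∀ y ∈ S, x ≠ y → x - y ∉ M

/-- The Cantor--Gordon parameter κ(M). -/
noncomputable def kappa (M : Set ℕ) : ℝ :=
  sSup {q : ℝ | ∃ c m : ℕ, 0 < m ∧ Nat.Coprime c m ∧
    q = sInf {r : ℝ | ∃ k ∈ M, r = (absMod (c * k) m : ℝ)} / m}

/-- Upper asymptotic density of a set of nonnegative integers. -/
noncomputable def upperDensity (S : Set ℕ) : ℝ :=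
  Filter.limsup (fun x : ℕ => ((S ∩ Set.Iic x).ncard : ℝ) / x) Filter.atTop

/-- Motzkin's maximal density μ(M) over all M-sets. -/
noncomputable def mu (M : Set ℕ) : ℝ :=
  sSup {d : ℝ | ∃ S : Set ℕ, isMSet M S ∧ d = upperDensity S}

lemma absMod_mul_left' (g y m : ℕ) : absMod (g*y) (g*m) = g * absMod y m := by
  unfold absMod
  rw [Nat.mul_mod_mul_left, ← Nat.mul_sub, min_mul_mul_left]

lemma absMod_le' (y m : ℕ) : absMod y m ≤ m :=
  le_trans (min_le_right _ _) (Nat.sub_le _ _)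

theorem stmt9 (a i l n : ℕ) (ha : 1 ≤ a) (ha4 : a % 4 = 1)
    (hl : l ≤ (3*a-1)/2)
    (hn : n = (16*a+17)*a + 3 + (4*a+1)*i + 2*a + 1 + l) :
    min (min (absMod (a*(4*(a+1)+i)) (a+n)) (absMod ((a+1)*(4*(a+1)+i)) (a+n)))
      (min (absMod ((2*a+1)*(4*(a+1)+i)) (a+n))
        (min (absMod ((3*a+1)*(4*(a+1)+i)) (a+n)) (absMod (n*(4*(a+1)+i)) (a+n))))
          = a*(4*a+4+i) ∧
    kappa {a, a+1, 2*a+1, 3*a+1, n} ≥ (4*a*(a+1) + a*i : ℝ) / (a+n) := by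
  set x := 4*(a+1)+i with hx
  set m := a + n with hmdef
  have hx0 : 0 < x := by omega
  have hlx : l < x := by omega
  have hm4 : m = 4*(a*x) + x + l := by subst hn; rw [hmdef, hx]; ring
  have hE : x ≤ a*x := Nat.le_mul_of_pos_left x ha
  -- expansions
  have hA : (a+1)*x = a*x + x := by ring
  have hB : (2*a+1)*x = 2*(a*x) + x := by ring
  have hC : (3*a+1)*x = 3*(a*x) + x := by ring
  -- the five values
  have e1 : absMod (a*x) m = a*x := by
    unfold absMod; rw [Nat.mod_eq_of_lt (by omega)]; omega
  have e2 : absMod ((a+1)*x) m = a*x + x := by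
    unfold absMod; rw [hA, Nat.mod_eq_of_lt (by omega)]; omega
  have e3 : a*x ≤ absMod ((2*a+1)*x) m := by
    unfold absMod; rw [hB, Nat.mod_eq_of_lt (by omega)]; omega
  have e4 : a*x ≤ absMod ((3*a+1)*x) m := by
    unfold absMod; rw [hC, Nat.mod_eq_of_lt (by omega)]; omega
  have hnx : n*x % m = m - a*x := by
    have h1 : n*x = (m - a*x) + m*(x-1) := by
      have h2 : n*x + a*x = x*m := by rw [hmdef]; ring
      have h3 : x*m = m*(x-1) + m := by
        obtain ⟨k, hk⟩ := Nat.exists_eq_succ_of_ne_zero (by omega : x ≠ 0)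
        rw [hk]; simp; ring
      omega
    rw [h1, Nat.add_mul_mod_self_left, Nat.mod_eq_of_lt (by omega)]
  have e5 : absMod (n*x) m = a*x := by
    unfold absMod; rw [hnx]; omega
  have emin : min (min (absMod (a*x) m) (absMod ((a+1)*x) m))
      (min (absMod ((2*a+1)*x) m)
        (min (absMod ((3*a+1)*x) m) (absMod (n*x) m))) = a*(4*a+4+i) := by
    have : a*(4*a+4+i) = a*x := by rw [hx]; ring
    omega
  refine ⟨emin, ?_⟩
  -- kappa part
  have hm0 : 0 < m := by omega
  set M : Set ℕ := {a, a+1, 2*a+1, 3*a+1, n} with hM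
  set g := Nat.gcd x m with hg
  have hg0 : 0 < g := Nat.gcd_pos_of_pos_left m hx0
  set c := x / g with hc
  set m' := m / g with hm'
  have hxc : x = g * c := (Nat.mul_div_cancel' (Nat.gcd_dvd_left x m)).symm
  have hmm : m = g * m' := (Nat.mul_div_cancel' (Nat.gcd_dvd_right x m)).symm
  have hm'0 : 0 < m' := Nat.div_pos (Nat.le_of_dvd hm0 (Nat.gcd_dvd_right x m)) hg0
  have hcop : Nat.Coprime c m' := Nat.coprime_div_gcd_div_gcd hg0
  have ht : ∀ k : ℕ, g * absMod (c*k) m' = absMod (k*x) m := by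
    intro k
    rw [show m = g * m' from hmm] -- ensure
    rw [← absMod_mul_left']
    congr 1
    rw [hxc]; ring
  set T : Set ℝ := {r : ℝ | ∃ k ∈ M, r = (absMod (c * k) m' : ℝ)} with hT
  have memT : ((absMod (c * a) m' : ℕ) : ℝ) ∈ T := ⟨a, Or.inl rfl, rfl⟩
  have hbdd : BddBelow T := ⟨0, by rintro r ⟨k, -, rfl⟩; positivity⟩
  have f1 : absMod (c * a) m' = a * c := by
    have h := ht a
    rw [e1] at h
    rw [show a * x = g * (a * c) by rw [hxc]; ring] at h
    exact Nat.eq_of_mul_eq_mul_left hg0 h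
  have hInf : sInf T = ((a*c : ℕ) : ℝ) := by
    refine le_antisymm (f1 ▸ csInf_le hbdd memT) ?_
    refine le_csInf ⟨_, memT⟩ ?_
    rintro r ⟨k, hk, rfl⟩
    have hk5 : k = a ∨ k = a+1 ∨ k = 2*a+1 ∨ k = 3*a+1 ∨ k = n := by
      simpa [hM] using hk
    have key : a * x ≤ absMod (k*x) m := by
      rcases hk5 with rfl|rfl|rfl|rfl|rfl
      · omega
      · omega
      · exact e3
      · exact e4
      · omega
    rw [← ht k] at key
    have : a * c ≤ absMod (c*k) m' := by
      have hax : a * x = g * (a * c) := by rw [hxc]; ring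
      rw [hax] at key
      exact Nat.le_of_mul_le_mul_left key hg0
    exact_mod_cast this
  have hval : ((a*c : ℕ) : ℝ) / m' = (4*a*(a+1) + a*i : ℝ) / (a+n) := by
    have h1 : (4*a*(a+1) + a*i : ℝ) = ((a * x : ℕ) : ℝ) := by
      push_cast [hx]; ring
    have h2 : ((a+n : ℕ) : ℝ) = ((m : ℕ) : ℝ) := by rw [hmdef]
    rw [h1]
    have : ((a*x : ℕ) : ℝ) = (g : ℝ) * ((a*c : ℕ) : ℝ) := by
      push_cast [hxc]; ring
    rw [this, show ((a:ℝ)+n) = ((m:ℕ):ℝ) by push_cast [hmdef]; ring,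
      show ((m:ℕ):ℝ) = (g:ℝ) * (m' : ℝ) by push_cast [hmm]; ring]
    rw [mul_div_mul_left _ _ (by exact_mod_cast hg0.ne')]
  have hmemK : (4*a*(a+1) + a*i : ℝ) / (a+n) ∈
      {q : ℝ | ∃ c m : ℕ, 0 < m ∧ Nat.Coprime c m ∧
        q = sInf {r : ℝ | ∃ k ∈ M, r = (absMod (c * k) m : ℝ)} / m} := by
    exact ⟨c, m', hm'0, hcop, by rw [← hT, hInf, hval]⟩
  have hKbdd : BddAbove {q : ℝ | ∃ c m : ℕ, 0 < m ∧ Nat.Coprime c m ∧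
      q = sInf {r : ℝ | ∃ k ∈ M, r = (absMod (c * k) m : ℝ)} / m} := by
    refine ⟨1, ?_⟩
    rintro q ⟨c₀, m₀, hm₀, -, rfl⟩
    have hb : BddBelow {r : ℝ | ∃ k ∈ M, r = (absMod (c₀ * k) m₀ : ℝ)} :=
      ⟨0, by rintro r ⟨k, -, rfl⟩; positivity⟩
    have hmem : ((absMod (c₀ * a) m₀ : ℕ) : ℝ) ∈
        {r : ℝ | ∃ k ∈ M, r = (absMod (c₀ * k) m₀ : ℝ)} := ⟨a, Or.inl rfl, rfl⟩
    have h1 : sInf {r : ℝ | ∃ k ∈ M, r = (absMod (c₀ * k) m₀ : ℝ)} ≤ m₀ := by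
      refine le_trans (csInf_le hb hmem) ?_
      exact_mod_cast absMod_le' _ _
    rw [div_le_one (by exact_mod_cast hm₀)]
    exact h1
  exact le_csSup hKbdd hmemK
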